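/- Let K be a convex body in ℝ^n in Behrend position and let 1 ≤ i ≤ n−1. Then for every i-dimensional linear subspace L of ℝ^n, there exists a diametrical direction w ∈ D_K such that ∠(L, w) ≥ arccos(√(i/n)). -/

import Mathlib

open MeasureTheory Metric Set Pointwise
open scoped RealInnerProductSpace

/-- A convex body: a compact convex set with nonempty interior. -/
def IsConvexBody {n : ℕ} (K : Set (EuclideanSpace ℝ (Fin n))) : Prop :=
  IsCompact K ∧ Convex ℝ K ∧ (interior K).Nonempty

/-- The isodiametric quotient `iq(K) = vol(K) / D(K)^n`. -/
noncomputable def iq {n : ℕ} (K : Set (EuclideanSpace ℝ (Fin n))) : ℝ :=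
  (volume K).toReal / Metric.diam K ^ n

/-- `K` is in Behrend position if `iq(K)` is maximal among invertible linear images of `K`. -/
def InBehrendPosition {n : ℕ} (K : Set (EuclideanSpace ℝ (Fin n))) : Prop :=
  ∀ A : EuclideanSpace ℝ (Fin n) ≃ₗ[ℝ] EuclideanSpace ℝ (Fin n), iq (A '' K) ≤ iq K

/-- The set of diametrical directions of `K`: unit vectors `u` such that some segment
`x + D(K)·[0,u]` is contained in `K`. -/
def diamDirs {n : ℕ} (K : Set (EuclideanSpace ℝ (Fin n))) :
    Set (EuclideanSpace ℝ (Fin n)) :=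
  {u | ‖u‖ = 1 ∧ ∃ x ∈ K, ∀ t ∈ Icc (0:ℝ) 1, x + (t * Metric.diam K) • u ∈ K}

/-- The angle between a linear subspace `L` and a vector `v`:
`∠(L,v) = inf { arccos(⟨z,v⟩/(‖z‖·‖v‖)) : z ∈ L, z ≠ 0 }`. -/
noncomputable def subspaceAngle {n : ℕ} (L : Submodule ℝ (EuclideanSpace ℝ (Fin n)))
    (v : EuclideanSpace ℝ (Fin n)) : ℝ :=
  sInf {θ | ∃ z ∈ L, z ≠ 0 ∧ θ = Real.arccos (⟪z, v⟫ / (‖z‖ * ‖v‖))}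

/-!
Suppose every diametrical direction `u` of `K` made an angle less than `arccos √(i/n)` with `L`,
that is, `n ‖P_{Lᗮ} u‖² < n - i`. Stretching `Lᗮ` by the factor `1 + ε` multiplies the volume by
`(1 + ε)^(n-i)` and the squared length of a chord in direction `u` by `1 + (2ε + ε²) ‖P_{Lᗮ} u‖²`.
By compactness the bound on `‖P_{Lᗮ} u‖²` holds with a uniform margin on all nearly diametrical
chords, while the other chords are shorter than `D(K)` by a margin. So for small `ε > 0` the `n`-th
power of the diameter grows, to first order in `ε`, by less than the volume, and the isodiametric
quotient strictly increases, contradicting the Behrend position.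
-/
open Filter Topology Module

theorem IsCompact.eventually_forall_le_sub_or_le_sub {X : Type*} [TopologicalSpace X] {S : Set X}
    (hS : IsCompact S) {f g : X → ℝ} (hf : ContinuousOn f S) (hg : ContinuousOn g S) {a b : ℝ}
    (h : ∀ p ∈ S, f p < a ∨ g p < b) :
    ∀ᶠ δ in 𝓝[>] 0, ∀ p ∈ S, f p ≤ a - δ ∨ g p ≤ b - δ := by
  obtain ⟨δ₀, hδ₀, hle⟩ := hS.exists_forall_le' (a := 0)
    (ContinuousOn.sup (f := fun p => a - f p) (g := fun p => b - g p)
      (continuousOn_const.sub hf) (continuousOn_const.sub hg)) fun p hp =>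
      (h p hp).elim (fun h => lt_max_of_lt_left (sub_pos.2 h))
        fun h => lt_max_of_lt_right (sub_pos.2 h)
  filter_upwards [Ioc_mem_nhdsGT hδ₀] with δ hδ p hp
  rcases le_max_iff.1 (hδ.2.trans (hle p hp)) with h | h
  · exact Or.inl (by linarith)
  · exact Or.inr (by linarith)

theorem eventually_one_add_mul_pow_lt {N m : ℕ} {g : ℝ} (hg : N * g < m) :
    ∀ᶠ ε in 𝓝[>] 0, (1 + (2 * ε + ε ^ 2) * g) ^ N < (1 + ε) ^ (2 * m) := by
  -- the difference of the two sides vanishes at `0` with derivative `2m - 2Ng > 0`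
  have h1 : HasDerivAt (fun ε : ℝ => (1 + ε) ^ (2 * m))
      ((2 * m : ℕ) * (1 + 0) ^ (2 * m - 1) * 1) 0 :=
    ((hasDerivAt_id' 0).const_add 1).pow _
  have h2 : HasDerivAt (fun ε : ℝ => (1 + (2 * ε + ε ^ 2) * g) ^ N)
      (N * (1 + (2 * 0 + 0 ^ 2) * g) ^ (N - 1) * ((2 * 1 + (2 : ℕ) * 0 ^ (2 - 1) * 1) * g)) 0 :=
    (((((hasDerivAt_id' 0).const_mul 2).add ((hasDerivAt_id' 0).pow 2)).mul_const g).const_add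
      1).pow N
  have hslope : Tendsto
      (fun ε => ε⁻¹ * ((1 + ε) ^ (2 * m) - (1 + (2 * ε + ε ^ 2) * g) ^ N)) (𝓝[>] 0)
      (𝓝 (2 * m - N * (2 * g))) := by
    simpa using (h1.sub h2).tendsto_slope_zero_right
  filter_upwards [hslope.eventually (lt_mem_nhds (a := 0) (by linarith)), self_mem_nhdsWithin]
    with ε hpos (hε : 0 < ε)
  exact sub_pos.1 (pos_of_mul_pos_right hpos (inv_nonneg.2 hε.le))

section

variable {E : Type*} [NormedAddCommGroup E] [InnerProductSpace ℝ E]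

namespace Submodule

variable (U : Submodule ℝ E) [U.HasOrthogonalProjection]

noncomputable def stretch (ε : ℝ) : E →L[ℝ] E :=
  ContinuousLinearMap.id ℝ E + ε • U.starProjection

theorem stretch_apply (ε : ℝ) (v : E) : U.stretch ε v = v + ε • U.starProjection v := rfl

theorem starProjection_stretch (ε : ℝ) (v : E) :
    U.starProjection (U.stretch ε v) = (1 + ε) • U.starProjection v := by
  rw [stretch_apply, map_add, map_smul, starProjection_eq_self_iff.2 (U.starProjection_apply_mem v),
    add_smul, one_smul]

theorem starProjection_orthogonal_stretch (ε : ℝ) (v : E) :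
    Uᗮ.starProjection (U.stretch ε v) = Uᗮ.starProjection v := by
  rw [stretch_apply, map_add, map_smul,
    (starProjection_apply_eq_zero_iff _).2
      (le_orthogonal_orthogonal U (U.starProjection_apply_mem v)), smul_zero, add_zero]

theorem norm_stretch_sq (ε : ℝ) (v : E) :
    ‖U.stretch ε v‖ ^ 2 = ‖v‖ ^ 2 + (2 * ε + ε ^ 2) * ‖U.starProjection v‖ ^ 2 := by
  rw [norm_sq_eq_add_norm_sq_starProjection (U.stretch ε v) U,
    norm_sq_eq_add_norm_sq_starProjection v U, starProjection_stretch,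
    starProjection_orthogonal_stretch, norm_smul, mul_pow, Real.norm_eq_abs, sq_abs]
  ring

theorem norm_stretch_le {ε : ℝ} (hε : 0 ≤ ε) (v : E) : ‖U.stretch ε v‖ ≤ (1 + ε) * ‖v‖ :=
  calc ‖U.stretch ε v‖ ≤ ‖v‖ + ‖ε • U.starProjection v‖ := norm_add_le _ _
    _ = ‖v‖ + ε * ‖U.starProjection v‖ := by
        rw [norm_smul, Real.norm_of_nonneg hε]
    _ ≤ (1 + ε) * ‖v‖ := by nlinarith [U.norm_starProjection_apply_le v, norm_nonneg v]

theorem norm_le_norm_stretch {ε : ℝ} (hε : 0 ≤ ε) (v : E) : ‖v‖ ≤ ‖U.stretch ε v‖ := by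
  refine le_of_sq_le_sq ?_ (norm_nonneg _)
  rw [norm_stretch_sq]
  have : 0 ≤ 2 * ε + ε ^ 2 := by positivity
  nlinarith [sq_nonneg ‖U.starProjection v‖]

theorem det_stretch [FiniteDimensional ℝ E] (ε : ℝ) :
    LinearMap.det (U.stretch ε : E →ₗ[ℝ] E) = (1 + ε) ^ finrank ℝ U := by
  let e := U.prodEquivOfIsCompl Uᗮ U.isCompl_orthogonal
  have h : (U.stretch ε : E →ₗ[ℝ] E) =
      e.toLinearMap ∘ₗ ((1 + ε) • LinearMap.id).prodMap LinearMap.id ∘ₗ e.symm.toLinearMap := by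
    ext x
    obtain ⟨⟨a, b⟩, rfl⟩ := e.surjective x
    simp [e, stretch_apply, coe_prodEquivOfIsCompl', add_smul, add_right_comm,
      (starProjection_apply_eq_zero_iff U).2 b.2]
  rw [h, LinearMap.det_conj, LinearMap.det_prodMap, LinearMap.det_smul, LinearMap.det_id,
    LinearMap.det_id, mul_one, mul_one]

theorem diam_le_diam_stretch_image {K : Set E} (hK : Bornology.IsBounded K) {ε : ℝ} (hε : 0 ≤ ε) :
    diam K ≤ diam (U.stretch ε '' K) :=
  diam_le_of_forall_dist_le diam_nonneg fun x hx y hy => by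
    rw [dist_eq_norm]
    refine (U.norm_le_norm_stretch hε _).trans ?_
    rw [map_sub, ← dist_eq_norm]
    exact dist_le_diam_of_mem ((U.stretch ε).lipschitz.isBounded_image hK)
      (mem_image_of_mem _ hx) (mem_image_of_mem _ hy)

theorem diam_stretch_image_sq_le {K : Set E} (hK : Bornology.IsBounded K) {ε : ℝ} (hε : 0 ≤ ε)
    {c r : ℝ} (hsplit : ∀ x ∈ K, ∀ y ∈ K, ‖U.starProjection (x - y)‖ ^ 2 ≤ c ∨ dist x y ≤ r) :
    diam (U.stretch ε '' K) ^ 2 ≤ max (diam K ^ 2 + (2 * ε + ε ^ 2) * c) (((1 + ε) * r) ^ 2) := by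
  have hM : 0 ≤ max (diam K ^ 2 + (2 * ε + ε ^ 2) * c) (((1 + ε) * r) ^ 2) :=
    le_max_of_le_right (sq_nonneg _)
  refine (Real.le_sqrt diam_nonneg hM).1 (diam_le_of_forall_dist_le (Real.sqrt_nonneg _) ?_)
  rintro _ ⟨x, hx, rfl⟩ _ ⟨y, hy, rfl⟩
  rw [Real.le_sqrt dist_nonneg hM, dist_eq_norm, ← map_sub]
  rcases hsplit x hx y hy with h | h
  · have hxy : ‖x - y‖ ≤ diam K := by
      rw [← dist_eq_norm]
      exact dist_le_diam_of_mem hK hx hy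
    refine le_max_of_le_left ?_
    rw [norm_stretch_sq]
    gcongr
  · rw [dist_eq_norm] at h
    exact le_max_of_le_right (by gcongr; exact (U.norm_stretch_le hε _).trans (by gcongr))

theorem eventually_diam_stretch_image_sq_pow_lt {K : Set E} (hK : Bornology.IsBounded K)
    {N m : ℕ} (hN : 0 < N) {c r : ℝ} (hc : N * c < m * diam K ^ 2) (hr₀ : 0 ≤ r)
    (hr : r < diam K)
    (hsplit : ∀ x ∈ K, ∀ y ∈ K, ‖U.starProjection (x - y)‖ ^ 2 ≤ c ∨ dist x y ≤ r) :
    ∀ᶠ ε in 𝓝[>] 0,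
      (diam (U.stretch ε '' K) ^ 2) ^ N < (1 + ε) ^ (2 * m) * (diam K ^ 2) ^ N := by
  set D := diam K
  have hD : 0 < D := hr₀.trans_lt hr
  have hg : N * (c / D ^ 2) < m := by rwa [← mul_div_assoc, div_lt_iff₀ (by positivity)]
  have hclose : ∀ᶠ ε in 𝓝[>] (0 : ℝ), (1 + ε) * r < D := by
    have : Tendsto (fun ε : ℝ => (1 + ε) * r) (𝓝[>] 0) (𝓝 ((1 + 0) * r)) :=
      ((continuous_const.add continuous_id).mul continuous_const).tendsto 0 |>.mono_left
        nhdsWithin_le_nhds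
    exact this.eventually (gt_mem_nhds (by simpa using hr))
  filter_upwards [eventually_one_add_mul_pow_lt hg, hclose, self_mem_nhdsWithin]
    with ε hpow hshrink (hε : 0 < ε)
  refine (pow_le_pow_left₀ (sq_nonneg _) (U.diam_stretch_image_sq_le hK hε.le hsplit) N).trans_lt ?_
  rcases max_choice (D ^ 2 + (2 * ε + ε ^ 2) * c) (((1 + ε) * r) ^ 2) with h | h <;> rw [h]
  · calc (D ^ 2 + (2 * ε + ε ^ 2) * c) ^ N
          = (D ^ 2) ^ N * (1 + (2 * ε + ε ^ 2) * (c / D ^ 2)) ^ N := by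
          rw [← mul_pow]
          field_simp
      _ < (D ^ 2) ^ N * (1 + ε) ^ (2 * m) := mul_lt_mul_of_pos_left hpow (by positivity)
      _ = (1 + ε) ^ (2 * m) * (D ^ 2) ^ N := mul_comm _ _
  · calc (((1 + ε) * r) ^ 2) ^ N < (D ^ 2) ^ N := by gcongr
      _ ≤ (1 + ε) ^ (2 * m) * (D ^ 2) ^ N :=
          le_mul_of_one_le_left (by positivity) (one_le_pow₀ (by linarith))

theorem finrank_mul_norm_starProjection_orthogonal_sq_lt [FiniteDimensional ℝ E]
    (L : Submodule ℝ E) {u : E} (hu : ‖u‖ = 1) (h : finrank ℝ L < finrank ℝ E * ‖L.starProjection u‖ ^ 2) :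
    finrank ℝ E * ‖Lᗮ.starProjection u‖ ^ 2 < finrank ℝ Lᗮ := by
  have hdim : (finrank ℝ L : ℝ) + finrank ℝ Lᗮ = finrank ℝ E := by
    exact_mod_cast L.finrank_add_finrank_orthogonal
  have hpyth := L.norm_sq_eq_add_norm_sq_starProjection u
  rw [hu, one_pow] at hpyth
  nlinarith

end Submodule

theorem exists_diam_stretch_image_pow_lt [FiniteDimensional ℝ E] {K : Set E} (hK : IsCompact K)
    (hD : 0 < diam K) (U : Submodule ℝ E)
    (hflat : ∀ x ∈ K, ∀ y ∈ K, dist x y = diam K →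
      finrank ℝ E * ‖U.starProjection (x - y)‖ ^ 2 < finrank ℝ U * diam K ^ 2) :
    ∃ ε > 0, diam (U.stretch ε '' K) ^ finrank ℝ E <
      (1 + ε) ^ finrank ℝ U * diam K ^ finrank ℝ E := by
  set D := diam K
  set N := finrank ℝ E
  set m := finrank ℝ U
  have hN : 0 < N := by
    obtain ⟨x, -, y, -, hxy⟩ := Set.not_subsingleton_iff.1 fun h => hD.ne' (diam_subsingleton h)
    have : Nontrivial E := nontrivial_of_ne x y hxy
    exact finrank_pos
  have hNℝ : (0 : ℝ) < N := Nat.cast_pos.2 hN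
  have hstrict : ∀ p ∈ K ×ˢ K,
      N * ‖U.starProjection (p.1 - p.2)‖ ^ 2 < m * D ^ 2 ∨ dist p.1 p.2 < D := fun p hp =>
    (dist_le_diam_of_mem hK.isBounded hp.1 hp.2).lt_or_eq.symm.imp (hflat _ hp.1 _ hp.2) id
  obtain ⟨δ, hmargin, hδ, hδD⟩ := ((hK.prod hK).eventually_forall_le_sub_or_le_sub
    (by fun_prop) (by fun_prop) hstrict |>.and (Ioo_mem_nhdsGT hD)).exists
  have hsplit : ∀ x ∈ K, ∀ y ∈ K,
      ‖U.starProjection (x - y)‖ ^ 2 ≤ (m * D ^ 2 - δ) / N ∨ dist x y ≤ D - δ :=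
    fun x hx y hy => (hmargin (x, y) ⟨hx, hy⟩).imp_left (le_div_iff₀' hNℝ).2
  obtain ⟨ε, (hε : 0 < ε), hlt⟩ := ((eventually_mem_nhdsWithin (s := Set.Ioi 0)).and
    (U.eventually_diam_stretch_image_sq_pow_lt hK.isBounded hN (m := m)
      (by rw [mul_div_cancel₀ _ hNℝ.ne']; linarith) (by linarith) (by linarith) hsplit)).exists
  refine ⟨ε, hε, (pow_lt_pow_iff_left₀ (by positivity) (by positivity) two_ne_zero).1 ?_⟩
  calc (diam (U.stretch ε '' K) ^ N) ^ 2 = (diam (U.stretch ε '' K) ^ 2) ^ N := by ring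
    _ < (1 + ε) ^ (2 * m) * (D ^ 2) ^ N := hlt
    _ = ((1 + ε) ^ m * D ^ N) ^ 2 := by ring

end

section

variable {n : ℕ}

theorem arccos_sqrt_le_subspaceAngle {L : Submodule ℝ (EuclideanSpace ℝ (Fin n))} (hL : L ≠ ⊥)
    {u : EuclideanSpace ℝ (Fin n)} (hu : ‖u‖ = 1) {c : ℝ} (hc : ‖L.starProjection u‖ ^ 2 ≤ c) :
    Real.arccos (Real.sqrt c) ≤ subspaceAngle L u := by
  obtain ⟨z₀, hz₀, hz₀0⟩ := Submodule.exists_mem_ne_zero_of_ne_bot hL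
  refine le_csInf ⟨_, z₀, hz₀, hz₀0, rfl⟩ ?_
  rintro _ ⟨z, hz, hz0, rfl⟩
  refine Real.arccos_le_arccos ?_
  rw [hu, mul_one, div_le_iff₀ (norm_pos_iff.2 hz0), ← L.starProjection_eq_self_iff.2 hz,
    L.inner_starProjection_left_eq_right, L.starProjection_eq_self_iff.2 hz, mul_comm]
  exact (real_inner_le_norm _ _).trans (mul_le_mul_of_nonneg_left
    (Real.le_sqrt_of_sq_le hc) (norm_nonneg _))

theorem mem_diamDirs_of_dist_eq_diam {K : Set (EuclideanSpace ℝ (Fin n))} (hK : Convex ℝ K)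
    (hD : 0 < diam K) {x y : EuclideanSpace ℝ (Fin n)} (hx : x ∈ K) (hy : y ∈ K)
    (hxy : dist x y = diam K) : (diam K)⁻¹ • (x - y) ∈ diamDirs K := by
  refine ⟨by rw [norm_smul, ← dist_eq_norm, hxy, norm_inv, Real.norm_of_nonneg hD.le,
    inv_mul_cancel₀ hD.ne'], y, hy, fun t ht => ?_⟩
  rw [smul_smul, mul_assoc, mul_inv_cancel₀ hD.ne', mul_one]
  exact hK.add_smul_sub_mem hy hx ht

theorem mul_norm_starProjection_sq_lt_of_forall_diamDirs {K : Set (EuclideanSpace ℝ (Fin n))}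
    (hK : Convex ℝ K) (hD : 0 < diam K) (U : Submodule ℝ (EuclideanSpace ℝ (Fin n))) {a b : ℝ}
    (h : ∀ u ∈ diamDirs K, a * ‖U.starProjection u‖ ^ 2 < b) :
    ∀ x ∈ K, ∀ y ∈ K, dist x y = diam K →
      a * ‖U.starProjection (x - y)‖ ^ 2 < b * diam K ^ 2 := by
  intro x hx y hy hxy
  have hu := h _ (mem_diamDirs_of_dist_eq_diam hK hD hx hy hxy)
  rw [map_smul, norm_smul, norm_inv, Real.norm_of_nonneg hD.le, mul_pow, inv_pow, ← mul_assoc,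
    mul_comm a, mul_assoc, inv_mul_lt_iff₀ (by positivity)] at hu
  linarith

theorem IsConvexBody.diam_pos {K : Set (EuclideanSpace ℝ (Fin n))} (hK : IsConvexBody K)
    (hn : 0 < n) : 0 < diam K := by
  have : NeZero n := ⟨hn.ne'⟩
  obtain ⟨z, hz⟩ := hK.2.2
  obtain ⟨ρ, hρ, hball⟩ := Metric.isOpen_iff.1 isOpen_interior z hz
  calc 0 < 2 * (ρ / 2) := by positivity
    _ = diam (closedBall z (ρ / 2)) := (diam_closedBall_eq z (by positivity)).symm
    _ ≤ diam K := diam_mono ((closedBall_subset_ball (by linarith)).trans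
        (hball.trans interior_subset)) hK.1.isBounded

theorem InBehrendPosition.iq_image_le {K : Set (EuclideanSpace ℝ (Fin n))}
    (hK : InBehrendPosition K) {f : EuclideanSpace ℝ (Fin n) →ₗ[ℝ] EuclideanSpace ℝ (Fin n)}
    (hf : LinearMap.det f ≠ 0) : iq (f '' K) ≤ iq K :=
  hK (f.equivOfDetNeZero hf)

theorem iq_lt_iq_image {K : Set (EuclideanSpace ℝ (Fin n))} (hK : IsConvexBody K)
    {f : EuclideanSpace ℝ (Fin n) →ₗ[ℝ] EuclideanSpace ℝ (Fin n)} (hfK : 0 < diam (f '' K))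
    (h : diam (f '' K) ^ n < |LinearMap.det f| * diam K ^ n) : iq K < iq (f '' K) := by
  have hvol : 0 < (volume K).toReal := ENNReal.toReal_pos
    (Measure.measure_pos_of_nonempty_interior _ hK.2.2).ne' hK.1.measure_lt_top.ne
  have hdet : 0 < |LinearMap.det f| := (abs_nonneg _).lt_of_ne fun h0 => by
    rw [← h0, zero_mul] at h
    exact (pow_nonneg diam_nonneg n).not_gt h
  calc iq K = |LinearMap.det f| * (volume K).toReal / (|LinearMap.det f| * diam K ^ n) := by
        rw [iq, mul_div_mul_left _ _ hdet.ne']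
    _ < |LinearMap.det f| * (volume K).toReal / diam (f '' K) ^ n :=
        div_lt_div_of_pos_left (by positivity) (by positivity) h
    _ = iq (f '' K) := by
        rw [iq, Measure.addHaar_image_linearMap, ENNReal.toReal_mul,
          ENNReal.toReal_ofReal (abs_nonneg _)]

end

theorem behrend_diamDirs_far_from_subspace_general {n : ℕ}
    (K : Set (EuclideanSpace ℝ (Fin n))) (hK : IsConvexBody K)
    (hB : InBehrendPosition K) (i : ℕ) (hi1 : 1 ≤ i)
    (L : Submodule ℝ (EuclideanSpace ℝ (Fin n))) (hL : Module.finrank ℝ L = i) :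
    ∃ w ∈ diamDirs K, Real.arccos (Real.sqrt ((i : ℝ) / n)) ≤ subspaceAngle L w := by
  have hn : 0 < n := by
    have := L.finrank_le
    rw [finrank_euclideanSpace_fin] at this
    omega
  have hLbot : L ≠ ⊥ := by
    rintro rfl
    rw [finrank_bot] at hL
    omega
  have hD := hK.diam_pos hn
  by_contra! hnear
  have hflat : ∀ u ∈ diamDirs K, (n : ℝ) * ‖Lᗮ.starProjection u‖ ^ 2 < finrank ℝ Lᗮ := by
    intro u hu
    have h := mt (arccos_sqrt_le_subspaceAngle hLbot hu.1 (c := i / n)) (hnear u hu).not_ge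
    rw [not_le, div_lt_iff₀ (by positivity), mul_comm, ← hL] at h
    simpa using L.finrank_mul_norm_starProjection_orthogonal_sq_lt hu.1 (by simpa using h)
  obtain ⟨ε, hε, hlt⟩ := exists_diam_stretch_image_pow_lt hK.1 hD Lᗮ
    (by simpa using mul_norm_starProjection_sq_lt_of_forall_diamDirs hK.2.1 hD Lᗮ hflat)
  have hdet : 0 < LinearMap.det (Lᗮ.stretch ε : EuclideanSpace ℝ (Fin n) →ₗ[ℝ] _) := by
    rw [Lᗮ.det_stretch]
    positivity
  rw [finrank_euclideanSpace_fin, ← Lᗮ.det_stretch, ← abs_of_pos hdet] at hlt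
  exact (hB.iq_image_le hdet.ne').not_gt
    (iq_lt_iq_image hK (hD.trans_le (Lᗮ.diam_le_diam_stretch_image hK.1.isBounded hε.le)) hlt)

/-- For a convex body in Behrend position and any `i`-dimensional linear subspace `L`
(with `1 ≤ i ≤ n-1`), some diametrical direction `w` satisfies
`∠(L,w) ≥ arccos(√(i/n))`. -/
theorem behrend_diamDirs_far_from_subspace {n : ℕ}
    (K : Set (EuclideanSpace ℝ (Fin n))) (hK : IsConvexBody K)
    (hB : InBehrendPosition K) (i : ℕ) (hi1 : 1 ≤ i) (hi2 : i ≤ n - 1)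
    (L : Submodule ℝ (EuclideanSpace ℝ (Fin n))) (hL : Module.finrank ℝ L = i) :
    ∃ w ∈ diamDirs K, Real.arccos (Real.sqrt ((i : ℝ) / n)) ≤ subspaceAngle L w :=
  behrend_diamDirs_far_from_subspace_general K hK hB i hi1 L hL
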